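/- Assume GMP(δ⁺, δ⁺) is witnessed by models that are δ-close to δ⁺ (i.e., cof(sup(M ∩ δ⁺)) = δ) and <δ-closed. Then a tree T of height δ⁺ has no weak ascent path of width < δ if and only if T has no cofinal branch. Equivalently: if T has a weak ascent path of width γ < δ, then T has a cofinal branch. -/

import Mathlib

open Cardinal

namespace GM

/-- The first-order language of set theory: a single binary relation. -/
def memLang : FirstOrder.Language :=
  { Functions := fun _ => Empty
    Relations := fun n => match n with | 2 => Unit | _ => Empty }

/-- Any set of ZF sets is a structure for the membership language,
interpreting the relation by `∈`. -/
instance setStructure (S : Set ZFSet) : memLang.Structure S where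
  funMap {n} f _ := f.elim
  RelMap {n} r v :=
    match n, r, v with
    | 2, _, v => ((v 0 : ↥S) : ZFSet) ∈ ((v 1 : ↥S) : ZFSet)
    | 0, r, _ => r.elim
    | 1, r, _ => r.elim
    | (_+3), r, _ => r.elim

/-- `M` is an elementary submodel of `H` (both viewed as ∈-structures). -/
def ElemSub (M H : Set ZFSet) : Prop :=
  ∃ h : M ⊆ H, ∀ (n : ℕ) (φ : memLang.Formula (Fin n)) (v : Fin n → M),
    φ.Realize (fun i => Set.inclusion h (v i)) ↔ φ.Realize v

/-- `x` is guessed in `M`: some `y ∈ M` has the same trace on `M` as `x`. -/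
def Guessed (x : ZFSet) (M : Set ZFSet) : Prop :=
  ∃ y ∈ M, y.toSet ∩ M = x.toSet ∩ M

/-- `x` is bounded in `M`: `x` is a subset of an element of `M`. -/
def Bounded (x : ZFSet) (M : Set ZFSet) : Prop :=
  ∃ y ∈ M, x.toSet ⊆ y.toSet

/-- `x` is δ-approximated in `M`: all intersections with `<δ`-sized elements of `M` lie in `M`. -/
def Approx (δ : Cardinal.{1}) (x : ZFSet) (M : Set ZFSet) : Prop :=
  ∀ a ∈ M, #a.toSet < δ → (x ∩ a) ∈ M

/-- `M` has the δ-guessing property (in `V`). -/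
def IsGuessing (δ : Cardinal.{1}) (M : Set ZFSet) : Prop :=
  ∀ x : ZFSet, Bounded x M → Approx δ x M → Guessed x M

/-- `M` has the δ-guessing property in `N`. -/
def IsGuessingIn (δ : Cardinal.{1}) (M N : Set ZFSet) : Prop :=
  ∀ x ∈ N, Bounded x M → Approx δ x M → Guessed x M

/-- The pair `(M, N)` has the δ-covering property (`≤ δ`-sized sets version). -/
def CoveringPair (δ : Cardinal.{1}) (M N : Set ZFSet) : Prop :=
  ∀ x ∈ N, #x.toSet ≤ δ → Bounded x M →
    ∃ y ∈ M, #y.toSet ≤ δ ∧ x.toSet ∩ M ⊆ y.toSet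

/-- A transitive class. -/
def Transitive' (H : Set ZFSet) : Prop := ∀ x ∈ H, x.toSet ⊆ H

/-- A powerful model: transitive and containing every set bounded in it. -/
def Powerful (H : Set ZFSet) : Prop :=
  Transitive' H ∧ ∀ x : ZFSet, Bounded x H → x ∈ H

/-- `κ` is `κ_M`: the least ordinal belonging to `M` but not a subset of `M`. -/
def IsKappa (M : Set ZFSet) (κ : ZFSet) : Prop :=
  κ.IsOrdinal ∧ κ ∈ M ∧ ¬ κ.toSet ⊆ M ∧
    ∀ β : ZFSet, β.IsOrdinal → β ∈ M → ¬ β.toSet ⊆ M → κ.toSet ⊆ β.toSet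

/-- A δ-guessing elementary submodel: an elementary submodel of some powerful
model with the δ-guessing property. -/
def IsGesm (δ : Cardinal.{1}) (M : Set ZFSet) : Prop :=
  (∃ H : Set ZFSet, Powerful H ∧ ElemSub M H) ∧ IsGuessing δ M

/-- The cofinality of the supremum of a set of (ZF-set) ordinals: the least
cardinality of a `⊆`-cofinal subset. -/
noncomputable def cofSup (A : Set ZFSet) : Cardinal.{1} :=
  sInf { c | ∃ B ⊆ A, #B = c ∧ ∀ x ∈ A, ∃ y ∈ B, x.toSet ⊆ y.toSet }

/-- Hereditarily of cardinality less than `θ`. -/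
inductive Hered (θ : Cardinal.{1}) : ZFSet → Prop
  | intro (x : ZFSet) : #x.toSet < θ → (∀ y ∈ x.toSet, Hered θ y) → Hered θ x

/-- The class `H_θ` of sets hereditarily of cardinality `< θ`. -/
def HSet (θ : Cardinal.{1}) : Set ZFSet := {x | Hered θ x}

/-- `S` is stationary in `𝒫_κ(X)`: every function `F` from finite subsets of `X`
to `<κ`-sized subsets of `X` has a closure point in `S`. -/
def StationaryIn (S : Set (Set ZFSet)) (X : Set ZFSet) (κ : Cardinal.{1}) : Prop :=
  ∀ F : Finset ZFSet → Set ZFSet, (∀ a : Finset ZFSet, F a ⊆ X ∧ #(F a) < κ) →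
    ∃ A ∈ S, A ⊆ X ∧ #A < κ ∧ ∀ a : Finset ZFSet, ↑a ⊆ A → F a ⊆ A

/-- The guessing model principle witnessed by models with property `P`:
for all sufficiently large regular `θ` there are stationarily many `<κ`-sized
δ-guessing elementary submodels of `H_θ` satisfying `P`. -/
def GMPwit (κ δ : Cardinal.{1}) (P : Set ZFSet → Prop) : Prop :=
  ∃ θ₀ : Cardinal.{1}, ∀ θ : Cardinal.{1}, θ₀ ≤ θ → θ.IsRegular →
    StationaryIn {M | ElemSub M (HSet θ) ∧ IsGuessing δ M ∧ #M < κ ∧ P M}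
      (HSet θ) κ

/-- The guessing model principle `GMP(κ, δ)`. -/
def GMP (κ δ : Cardinal.{1}) : Prop := GMPwit κ δ fun _ => True

/-- `R` is a binary relation on `T` (a set of ordered pairs from `T`). -/
def IsRel (T R : ZFSet) : Prop :=
  ∀ p ∈ R.toSet, ∃ s ∈ T.toSet, ∃ t ∈ T.toSet, p = ZFSet.pair s t

/-- The set of `R`-predecessors of `t` in `T`. -/
def Pred (T R t : ZFSet) : Set ZFSet := {s | s ∈ T.toSet ∧ ZFSet.pair s t ∈ R}

/-- `t` has level `α` in the tree `(T, R)`: the predecessors of `t` are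
order-isomorphic to the ordinal `α`. -/
def HasLevel (T R t α : ZFSet) : Prop :=
  α.IsOrdinal ∧ ∃ e : α.toSet ≃ Pred T R t,
    ∀ a b : α.toSet, (a : ZFSet) ∈ (b : ZFSet) ↔ ZFSet.pair (e a : ZFSet) (e b : ZFSet) ∈ R

/-- `(T, R)` is a tree of height the ordinal `Λ`. -/
def IsTreeOfHeight (T R Λ : ZFSet) : Prop :=
  Λ.IsOrdinal ∧ IsRel T R ∧
  (∀ s t u : ZFSet, ZFSet.pair s t ∈ R → ZFSet.pair t u ∈ R → ZFSet.pair s u ∈ R) ∧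
  (∀ t : ZFSet, ZFSet.pair t t ∉ R) ∧
  (∀ t ∈ T.toSet, ∃ α ∈ Λ.toSet, HasLevel T R t α) ∧
  (∀ α ∈ Λ.toSet, ∃ t ∈ T.toSet, HasLevel T R t α)

/-- `b` is a cofinal branch through the tree `(T, R)` of height `Λ`. -/
def IsBranch (T R Λ b : ZFSet) : Prop :=
  b.toSet ⊆ T.toSet ∧
  (∀ s ∈ b.toSet, ∀ t ∈ b.toSet, s = t ∨ ZFSet.pair s t ∈ R ∨ ZFSet.pair t s ∈ R) ∧
  ∀ α ∈ Λ.toSet, ∃ t ∈ b.toSet, HasLevel T R t α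

/-- Every level of `(T, R)` has size `< κ`. -/
def SlimTree (T R Λ : ZFSet) (κ : Cardinal.{1}) : Prop :=
  ∀ α ∈ Λ.toSet, #{t : ZFSet | t ∈ T.toSet ∧ HasLevel T R t α} < κ

/-- `Λ` is (as a ZF-set ordinal) the cardinal `c`: an ordinal of cardinality `c`
all of whose elements have cardinality `< c`. -/
def IsCardOrd (Λ : ZFSet) (c : Cardinal.{1}) : Prop :=
  Λ.IsOrdinal ∧ #Λ.toSet = c ∧ ∀ β ∈ Λ.toSet, #β.toSet < c

/-- `M` is closed under `<μ`-sized subsets (as sets of its elements). -/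
def ClosedUnder (μ : Cardinal.{1}) (M : Set ZFSet) : Prop :=
  ∀ A : Set ZFSet, A ⊆ M → #A < μ → ∃ z ∈ M, z.toSet = A

/-- `M` is closed under `<μ`-sized subsets which are bounded in `M`. -/
def SeqClosed (μ : Cardinal.{1}) (M : Set ZFSet) : Prop :=
  ∀ A : Set ZFSet, A ⊆ M → #A < μ → (∃ y ∈ M, A ⊆ y.toSet) → ∃ z ∈ M, z.toSet = A

/-- `β` is a limit point of the set (of ordinals) `c`. -/
def LimPt (c β : ZFSet) : Prop :=
  β ≠ ∅ ∧ ∀ γ ∈ β.toSet, ∃ ξ ∈ c.toSet, ξ ∈ β.toSet ∧ (γ ∈ ξ.toSet ∨ γ = ξ)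

/-- `c` is a club in the ordinal `α`. -/
def ClubIn (c α : ZFSet) : Prop :=
  c.toSet ⊆ α.toSet ∧ (∀ β ∈ α.toSet, ∃ γ ∈ c.toSet, β ∈ γ.toSet ∨ β = γ) ∧
  ∀ β ∈ α.toSet, LimPt c β → β ∈ c.toSet

/-- `c` has order type the ordinal `o`. -/
def HasOtp (c o : ZFSet) : Prop :=
  o.IsOrdinal ∧ ∃ e : o.toSet ≃ c.toSet,
    ∀ a b : o.toSet, (a : ZFSet) ∈ (b : ZFSet) ↔ ((e a : ZFSet) ∈ (e b : ZFSet))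

/-- `f` is (the graph of) a function from `a` to `b`. -/
def IsFuncRel (f a b : ZFSet) : Prop :=
  (∀ p ∈ f.toSet, ∃ x ∈ a.toSet, ∃ y ∈ b.toSet, p = ZFSet.pair x y) ∧
  ∀ x ∈ a.toSet, ∃! y : ZFSet, ZFSet.pair x y ∈ f

/-- `f` is a surjection from `a` onto `b`. -/
def SurjOnto (f a b : ZFSet) : Prop :=
  IsFuncRel f a b ∧ ∀ y ∈ b.toSet, ∃ x ∈ a.toSet, ZFSet.pair x y ∈ f

/-- `θ` is a cardinal in the (transitive) class `V`: an ordinal not surjected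
onto by any smaller ordinal via a function of `V`. -/
def IsCardinalIn (V : Set ZFSet) (θ : ZFSet) : Prop :=
  θ.IsOrdinal ∧ ∀ β ∈ θ.toSet, ∀ f ∈ V, ¬ SurjOnto f β θ

/-- A dense subset of a preorder. -/
def DenseSub (P : Type) [Preorder P] (D : Set P) : Prop := ∀ p : P, ∃ q ∈ D, q ≤ p

/-- A subset of a preorder dense below `p₀`. -/
def DenseBelow (P : Type) [Preorder P] (p₀ : P) (D : Set P) : Prop :=
  ∀ p : P, p ≤ p₀ → ∃ q ∈ D, q ≤ p

/-- A filter on a preorder. -/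
def IsFilterSet (P : Type) [Preorder P] (F : Set P) : Prop :=
  F.Nonempty ∧ (∀ p ∈ F, ∀ q : P, p ≤ q → q ∈ F) ∧
    ∀ p ∈ F, ∀ q ∈ F, ∃ r ∈ F, r ≤ p ∧ r ≤ q

/-- The forcing axiom `FA(P, κ)`: any κ-many dense sets are met by a filter. -/
def FA (P : Type) [Preorder P] (κ : Cardinal.{1}) : Prop :=
  ∀ 𝒟 : Set (Set P), Cardinal.lift.{1} #𝒟 ≤ κ →
    (∀ D ∈ 𝒟, DenseSub P D) →
    ∃ F : Set P, IsFilterSet P F ∧ ∀ D ∈ 𝒟, (F ∩ D).Nonempty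

end GM


/-!
Take a model `M` of the guessing model principle which is moreover closed under a few Skolem
operations: stationarity lets one close under any operation with small values, and this replaces
elementarity throughout. Let `α* = sup (M ∩ δ⁺) < δ⁺`. Each `β ∈ M ∩ δ⁺` lies below `α*`, so
the ascent path gives `ζ, η < γ` with `t β ζ <_T t α* η`; since `M ∩ δ⁺` has cofinality
`δ > |γ|`, one `η` serves cofinally many `β`. Put `s = t α* η` and let `D` be the set of codes
`(β, ζ)` with `t β ζ <_T s`. On any `a ∈ M` of size `≤ δ` the trace of `D` agrees with the set
of codes below a single node `t β ζ <_T s` with `β ∈ M` above all levels coded in `a`, so it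
lies in `M`: `D` is `δ⁺`-approximated, hence guessed by some `E ∈ M`. The nodes coded in `E`
are pairwise comparable, since an incomparable pair would be found in `M`, hence in `D`; and
they reach every level, since otherwise the supremum of their levels would lie in `M ∩ δ⁺`,
below the level of some code in `M ∩ D ⊆ E`. Their downward closure is a cofinal branch.
-/

namespace ZFSet

theorem isOrdinal_sUnion {x : ZFSet} (h : ∀ y ∈ x, y.IsOrdinal) : (⋃₀ x : ZFSet).IsOrdinal :=
  isOrdinal_iff_forall_mem_isOrdinal.2
    ⟨IsTransitive.sUnion' fun y hy => (h y hy).isTransitive, fun z hz => by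
      obtain ⟨y, hy, hzy⟩ := mem_sUnion.1 hz
      exact (h y hy).mem hzy⟩

theorem IsOrdinal.eq_of_equiv {a b : ZFSet} (ha : a.IsOrdinal) (hb : b.IsOrdinal)
    (e : a.toSet ≃ b.toSet)
    (he : ∀ p q : a.toSet, (p : ZFSet) ∈ (q : ZFSet) ↔ (e p : ZFSet) ∈ (e q : ZFSet)) :
    a = b := by
  have key : ∀ c (hc : c ∈ a), (e ⟨c, hc⟩ : ZFSet) = c := by
    intro c
    induction c using inductionOn with
    | _ c IH =>
      intro hc
      ext z
      constructor
      · intro hz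
        obtain ⟨d, hd⟩ := e.surjective ⟨z, hb.mem_trans hz (e ⟨c, hc⟩).2⟩
        have hdc : (d : ZFSet) ∈ c := (he d ⟨c, hc⟩).2 (by rw [hd]; exact hz)
        have hdz : (d : ZFSet) = z := (IH d hdc d.2).symm.trans (congrArg Subtype.val hd)
        exact hdz ▸ hdc
      · intro hz
        rw [← IH z hz (ha.mem_trans hz hc)]
        exact (he ⟨z, _⟩ ⟨c, hc⟩).1 hz
  ext z
  constructor
  · intro hz
    rw [← key z hz]
    exact (e _).2
  · intro hz
    obtain ⟨d, hd⟩ := e.surjective ⟨z, hz⟩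
    have hdz : (d : ZFSet) = z := (key d d.2).symm.trans (congrArg Subtype.val hd)
    exact hdz ▸ d.2

end ZFSet

namespace GM

open ZFSet

universe u v

theorem mk_biUnion_le_of_forall_le {α ι : Type u} {δ : Cardinal.{u}} (hδ : ℵ₀ ≤ δ) {s : Set ι}
    (hs : #s ≤ δ) {A : ι → Set α} (hA : ∀ i ∈ s, #(A i) ≤ δ) : #(⋃ i ∈ s, A i) ≤ δ := by
  refine (mk_biUnion_le A s).trans (mul_le_of_le hδ hs ?_)
  exact ciSup_le' fun i => hA i i.2

theorem mk_sUnion_le_of_forall_le {δ : Cardinal.{1}} (hδ : ℵ₀ ≤ δ) {z : ZFSet}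
    (hz : #z.toSet ≤ δ) (hm : ∀ y ∈ z, #y.toSet ≤ δ) : #(⋃₀ z : ZFSet).toSet ≤ δ := by
  rw [show (⋃₀ z : ZFSet).toSet = ⋃ y ∈ z.toSet, y.toSet from
    Set.ext fun w => by simp only [Set.mem_iUnion, exists_prop]; exact mem_sUnion]
  exact mk_biUnion_le_of_forall_le hδ hz hm

def IsTransRel (R : ZFSet) : Prop :=
  ∀ a b c : ZFSet, pair a b ∈ R → pair b c ∈ R → pair a c ∈ R

def TreeLE (R p q : ZFSet) : Prop := p = q ∨ pair p q ∈ R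

def Comparable (R p q : ZFSet) : Prop := p = q ∨ pair p q ∈ R ∨ pair q p ∈ R

theorem TreeLE.trans_rel {R p q r : ZFSet} (hR : IsTransRel R) (hpq : TreeLE R p q)
    (hqr : pair q r ∈ R) : pair p r ∈ R := by
  rcases hpq with rfl | hpq
  · exact hqr
  · exact hR _ _ _ hpq hqr

section Levels

variable {T R s w : ZFSet} {α μ ν : ZFSet}

theorem HasLevel.comparable_of_mem_pred (h : HasLevel T R s α) {p q : ZFSet}
    (hp : p ∈ Pred T R s) (hq : q ∈ Pred T R s) : Comparable R p q := by
  obtain ⟨hα, e, he⟩ := h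
  obtain ⟨cp, hcp⟩ := e.surjective ⟨p, hp⟩
  obtain ⟨cq, hcq⟩ := e.surjective ⟨q, hq⟩
  have hp' : (e cp : ZFSet) = p := congrArg Subtype.val hcp
  have hq' : (e cq : ZFSet) = q := congrArg Subtype.val hcq
  rcases (hα.mem cp.2).mem_trichotomous (hα.mem cq.2) with h | h | h
  · exact Or.inr (Or.inl (hp' ▸ hq' ▸ (he cp cq).1 h))
  · exact Or.inl (hp'.symm.trans (hq' ▸ congrArg _ (congrArg e (Subtype.ext h))))
  · exact Or.inr (Or.inr (hp' ▸ hq' ▸ (he cq cp).1 h))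

theorem hasLevel_of_equiv (hR : IsTransRel R) (hα : α.IsOrdinal) (e : α.toSet ≃ Pred T R s)
    (he : ∀ a b : α.toSet, (a : ZFSet) ∈ (b : ZFSet) ↔
      pair (e a : ZFSet) (e b : ZFSet) ∈ R)
    (c : α.toSet) : HasLevel T R (e c) c := by
  have hsub : ∀ d : (c : ZFSet).toSet, (d : ZFSet) ∈ α := fun d => hα.mem_trans d.2 c.2
  have hmem : ∀ d : (c : ZFSet).toSet, (e ⟨d, hsub d⟩ : ZFSet) ∈ Pred T R (e c) :=
    fun d => ⟨(e ⟨d, hsub d⟩).2.1, (he ⟨d, hsub d⟩ c).1 d.2⟩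
  refine ⟨hα.mem c.2, Equiv.ofBijective (fun d => ⟨_, hmem d⟩) ⟨?_, ?_⟩,
    fun p q => he ⟨p, hsub p⟩ ⟨q, hsub q⟩⟩
  · intro d₁ d₂ hd
    exact Subtype.ext (Subtype.mk.inj (e.injective (Subtype.ext (Subtype.mk.inj hd))))
  · rintro ⟨x, hxT, hxc⟩
    obtain ⟨d, hd⟩ := e.surjective ⟨x, hxT, hR _ _ _ hxc (e c).2.2⟩
    have hdx : (e d : ZFSet) = x := congrArg Subtype.val hd
    have hdc : (d : ZFSet) ∈ (c : ZFSet) := (he d c).2 (hdx ▸ hxc)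
    exact ⟨⟨d, hdc⟩, Subtype.ext hdx⟩

theorem HasLevel.unique (h₁ : HasLevel T R w μ) (h₂ : HasLevel T R w ν) : μ = ν := by
  obtain ⟨hμ, e₁, he₁⟩ := h₁
  obtain ⟨hν, e₂, he₂⟩ := h₂
  refine hμ.eq_of_equiv hν (e₁.trans e₂.symm) fun p q => ?_
  rw [he₁, he₂, Equiv.trans_apply, Equiv.trans_apply, Equiv.apply_symm_apply,
    Equiv.apply_symm_apply]

theorem HasLevel.exists_level_of_mem_pred (hR : IsTransRel R) (h : HasLevel T R s α)
    (hw : w ∈ Pred T R s) : ∃ μ ∈ α, HasLevel T R w μ := by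
  obtain ⟨hα, e, he⟩ := h
  obtain ⟨c, hc⟩ := e.surjective ⟨w, hw⟩
  have hc' : HasLevel T R (e c) c := hasLevel_of_equiv hR hα e he c
  rw [hc] at hc'
  exact ⟨c, c.2, hc'⟩

theorem HasLevel.exists_pred_of_mem (hR : IsTransRel R) (h : HasLevel T R s α) (hμ : μ ∈ α) :
    ∃ w ∈ Pred T R s, HasLevel T R w μ := by
  obtain ⟨hα, e, he⟩ := h
  exact ⟨e ⟨μ, hμ⟩, (e ⟨μ, hμ⟩).2, hasLevel_of_equiv hR hα e he ⟨μ, hμ⟩⟩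

theorem HasLevel.rel_of_level_mem (hR : IsTransRel R) (h : HasLevel T R s α) {u : ZFSet}
    (hw : w ∈ Pred T R s) (hu : u ∈ Pred T R s) (hwμ : HasLevel T R w μ)
    (huν : HasLevel T R u ν) (hμν : μ ∈ ν) : pair w u ∈ R := by
  rcases h.comparable_of_mem_pred hw hu with rfl | hwu | huw
  · exact absurd (hwμ.unique huν ▸ hμν) (mem_irrefl ν)
  · exact hwu
  · obtain ⟨ν', hν'μ, huν'⟩ := hwμ.exists_level_of_mem_pred hR ⟨hu.1, huw⟩
    rw [huν.unique huν'] at hμν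
    exact absurd (hwμ.1.mem_trans hμν hν'μ) (mem_irrefl μ)

theorem HasLevel.comparable_of_treeLE (h : HasLevel T R s α) {p q : ZFSet} (hp : p ∈ T)
    (hq : q ∈ T) (hps : TreeLE R p s) (hqs : TreeLE R q s) : Comparable R p q := by
  rcases hps with rfl | hps
  · rcases hqs with rfl | hqs
    · exact Or.inl rfl
    · exact Or.inr (Or.inr hqs)
  · rcases hqs with rfl | hqs
    · exact Or.inr (Or.inl hps)
    · exact h.comparable_of_mem_pred ⟨hp, hps⟩ ⟨hq, hqs⟩

end Levels

theorem exists_branch_of_chain {T R Λ : ZFSet} (htree : IsTreeOfHeight T R Λ) {C : Set ZFSet}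
    (hCT : C ⊆ T.toSet) (hC : ∀ p ∈ C, ∀ q ∈ C, Comparable R p q)
    (hunb : ∀ α ∈ Λ, ∃ p ∈ C, ∃ β, HasLevel T R p β ∧ α ∈ β) :
    ∃ b, IsBranch T R Λ b := by
  obtain ⟨-, -, hR, -, hlevels, -⟩ := htree
  have hlev : ∀ p ∈ C, ∃ β, HasLevel T R p β := fun p hp =>
    let ⟨β, _, hβ⟩ := hlevels p (hCT hp); ⟨β, hβ⟩
  refine ⟨T.sep fun w => ∃ p ∈ C, TreeLE R w p, fun w hw => (mem_sep.1 hw).1, ?_, ?_⟩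
  · intro w hw v hv
    obtain ⟨hwT, p, hp, hwp⟩ := mem_sep.1 hw
    obtain ⟨hvT, q, hq, hvq⟩ := mem_sep.1 hv
    obtain ⟨β, hβ⟩ := hlev p hp
    obtain ⟨β', hβ'⟩ := hlev q hq
    rcases hC p hp q hq with rfl | hpq | hqp
    · exact hβ.comparable_of_treeLE hwT hvT hwp hvq
    · exact hβ'.comparable_of_treeLE hwT hvT (Or.inr (hwp.trans_rel hR hpq)) hvq
    · exact hβ.comparable_of_treeLE hwT hvT hwp (Or.inr (hvq.trans_rel hR hqp))
  · intro α hα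
    obtain ⟨p, hp, β, hβ, hαβ⟩ := hunb α hα
    obtain ⟨w, hw, hwα⟩ := hβ.exists_pred_of_mem hR hαβ
    exact ⟨w, mem_sep.2 ⟨hw.1, p, hp, Or.inr hw.2⟩, hwα⟩

section Hereditary

variable {θ : Cardinal.{1}} {x y : ZFSet}

theorem Hered.mk_lt (h : Hered θ x) : #x.toSet < θ := by
  cases h with | intro _ h _ => exact h

theorem Hered.of_mem (h : Hered θ x) (hy : y ∈ x) : Hered θ y := by
  cases h with | intro _ _ h => exact h y hy

theorem Hered.of_subset (h : Hered θ x) (hy : y ⊆ x) : Hered θ y :=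
  .intro y ((mk_le_mk_of_subset (coe_subset_coe.2 hy)).trans_lt h.mk_lt) fun _ hz =>
    h.of_mem (hy hz)

theorem exists_hered (x : ZFSet.{0}) : ∃ c : Cardinal.{1}, ∀ θ, c < θ → Hered θ x := by
  induction x using ZFSet.inductionOn with
  | _ x IH =>
    choose f hf using fun y : x.toSet => IH y y.2
    refine ⟨max #x.toSet (⨆ y, f y), fun θ hθ => .intro x ((le_max_left _ _).trans_lt hθ) ?_⟩
    intro y hy
    exact hf ⟨y, hy⟩ θ (((le_ciSup bddAbove_of_small ⟨y, hy⟩).trans (le_max_right _ _)).trans_lt hθ)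

theorem exists_isRegular_hered (x : ZFSet.{0}) (c : Cardinal.{1}) :
    ∃ θ, c < θ ∧ θ.IsRegular ∧ Hered θ x := by
  obtain ⟨c', hc'⟩ := exists_hered x
  refine ⟨Order.succ (max (max c c') ℵ₀), ?_, isRegular_succ (le_max_right _ _), hc' _ ?_⟩ <;>
  · refine lt_of_le_of_lt ?_ (Order.lt_succ _)
    simp

end Hereditary

theorem StationaryIn.exists_closed {S : Set (Set ZFSet)} {X : Set ZFSet} {δ : Cardinal.{1}}
    (hS : StationaryIn S X (Order.succ δ)) (hδ : ℵ₀ ≤ δ) (x : ZFSet)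
    (g : ZFSet → ZFSet → Set ZFSet) (hg : ∀ u v, #(g u v) ≤ δ) :
    ∃ M ∈ S, M ⊆ X ∧ (x ∈ X → x ∈ M) ∧ ∀ u ∈ M, ∀ v ∈ M, g u v ∩ X ⊆ M := by
  classical
  let F : Finset ZFSet → Set ZFSet := fun a =>
    insert x (⋃ u ∈ (a : Set ZFSet), ⋃ v ∈ (a : Set ZFSet), g u v) ∩ X
  have hF : ∀ a, F a ⊆ X ∧ #(F a) < Order.succ δ := by
    intro a
    have ha : #(a : Set ZFSet) ≤ δ := a.finite_toSet.lt_aleph0.le.trans hδ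
    refine ⟨Set.inter_subset_right, Order.lt_succ_iff.2 ?_⟩
    refine (mk_le_mk_of_subset Set.inter_subset_left).trans (mk_insert_le.trans ?_)
    refine add_le_of_le hδ ?_ (one_le_aleph0.trans hδ)
    exact mk_biUnion_le_of_forall_le hδ ha fun u _ =>
      mk_biUnion_le_of_forall_le hδ ha fun v _ => hg u v
  obtain ⟨M, hMS, hMX, -, hM⟩ := hS F hF
  refine ⟨M, hMS, hMX, fun hx => hM ∅ (by simp) ⟨Set.mem_insert _ _, hx⟩, ?_⟩
  intro u hu v hv z ⟨hz, hzX⟩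
  refine hM {u, v} (by simp [Set.insert_subset_iff, hu, hv]) ⟨Set.mem_insert_of_mem _ ?_, hzX⟩
  exact Set.mem_biUnion (by simp) (Set.mem_biUnion (by simp) hz)

section Cofinality

theorem cofSup_le_mk {A B : Set ZFSet} (hBA : B ⊆ A)
    (hB : ∀ x ∈ A, ∃ y ∈ B, x.toSet ⊆ y.toSet) : cofSup A ≤ #B :=
  csInf_le' ⟨B, hBA, rfl, hB⟩

theorem exists_not_subset_of_one_lt_cofSup {A : Set ZFSet} (hA : 1 < cofSup A) {m : ZFSet}
    (hm : m ∈ A) : ∃ x ∈ A, ¬x.toSet ⊆ m.toSet := by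
  by_contra! h
  have := cofSup_le_mk (Set.singleton_subset_iff.2 hm) fun x hx => ⟨m, rfl, h x hx⟩
  exact (hA.trans_le (this.trans (mk_singleton m).le)).false

theorem exists_cofinal_color {A I : Set ZFSet} (hA : ∀ x ∈ A, x.IsOrdinal) (hI : #I < cofSup A)
    (P : ZFSet → ZFSet → Prop) (hP : ∀ y ∈ A, ∃ i ∈ I, P y i) :
    ∃ i ∈ I, ∀ x ∈ A, ∃ y ∈ A, P y i ∧ x.toSet ⊆ y.toSet := by
  by_contra! h
  choose! f hfA hf using h
  refine hI.not_ge ((cofSup_le_mk (Set.image_subset_iff.2 hfA) fun z hz => ?_).trans mk_image_le)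
  obtain ⟨i, hi, hzi⟩ := hP z hz
  refine ⟨f i, Set.mem_image_of_mem f hi, ?_⟩
  have hsub := ((hA _ (hfA i hi)).subset_total (hA z hz)).resolve_left (hf i hi z hz hzi)
  exact coe_subset_coe.2 hsub

end Cofinality

section CardOrd

variable {Λ x : ZFSet} {δ : Cardinal.{1}}

theorem IsCardOrd.mk_le_of_mem (hΛ : IsCardOrd Λ (Order.succ δ)) (hx : x ∈ Λ) : #x.toSet ≤ δ :=
  Order.lt_succ_iff.1 (hΛ.2.2 x hx)

theorem IsCardOrd.mem_of_mk_le (hΛ : IsCardOrd Λ (Order.succ δ)) (hx : x.IsOrdinal)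
    (hδx : #x.toSet ≤ δ) : x ∈ Λ := by
  refine (hΛ.1.not_subset_iff_mem hx).1 fun hΛx => ?_
  have := (mk_le_mk_of_subset (show Λ.toSet ⊆ x.toSet from hΛx)).trans hδx
  rw [hΛ.2.1] at this
  exact (Order.lt_succ δ).not_ge this

theorem IsCardOrd.setOf_eq (hΛ : IsCardOrd Λ (Order.succ δ)) (M : Set ZFSet) :
    {x | x ∈ M ∧ x.IsOrdinal ∧ #x.toSet ≤ δ} = M ∩ Λ.toSet :=
  Set.ext fun _ => ⟨fun ⟨hM, hx, hδx⟩ => ⟨hM, hΛ.mem_of_mk_le hx hδx⟩,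
    fun ⟨hM, hx⟩ => ⟨hM, hΛ.1.mem hx, hΛ.mk_le_of_mem hx⟩⟩

theorem IsCardOrd.sUnion_mem (hΛ : IsCardOrd Λ (Order.succ δ)) (hδ : ℵ₀ ≤ δ) {z : ZFSet}
    (hz : z ⊆ Λ) (hδz : #z.toSet ≤ δ) : ⋃₀ z ∈ Λ :=
  hΛ.mem_of_mk_le (isOrdinal_sUnion fun _ hy => hΛ.1.mem (hz hy))
    (mk_sUnion_le_of_forall_le hδ hδz fun _ hy => hΛ.mk_le_of_mem (hz hy))

end CardOrd

section Guessing

variable {T R : ZFSet.{u}} {Λ P : ZFSet.{0}} {f : ZFSet.{0} → ZFSet.{u}}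

def levelSup (T R : ZFSet.{u}) (Λ P : ZFSet.{0}) (f : ZFSet.{0} → ZFSet.{u}) (u : ZFSet.{0}) :
    ZFSet.{0} :=
  ⋃₀ Λ.sep fun β => ∃ x ∈ u, x ∈ P ∧ HasLevel T R (f x) β

def below (T R : ZFSet.{u}) (P : ZFSet.{0}) (f : ZFSet.{0} → ZFSet.{u}) (u : ZFSet.{0})
    (s : ZFSet.{u}) : ZFSet.{0} :=
  u.sep fun x => x ∈ P ∧ f x ∈ Pred T R s

open Classical in
noncomputable def incomparablePair (R : ZFSet.{u}) (f : ZFSet.{0} → ZFSet.{u})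
    (C : Set ZFSet.{0}) : Set ZFSet.{0} :=
  if h : ∃ x ∈ C, ∃ y ∈ C, ¬Comparable R (f x) (f y) then {h.choose, h.choose_spec.2.choose}
  else ∅

def PredCofinal (M : Set ZFSet.{0}) (T R : ZFSet.{u}) (Λ P : ZFSet.{0})
    (f : ZFSet.{0} → ZFSet.{u}) (s : ZFSet.{u}) : Prop :=
  ∀ y ∈ M, y ∈ Λ → ∃ x ∈ M, x ∈ P ∧ f x ∈ Pred T R s ∧ ∃ β ∈ Λ, y ∈ β ∧ HasLevel T R (f x) β

theorem isOrdinal_levelSup (hΛ : Λ.IsOrdinal) {u : ZFSet} : (levelSup T R Λ P f u).IsOrdinal :=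
  isOrdinal_sUnion fun _ hβ => hΛ.mem (mem_sep.1 hβ).1

theorem levelSup_subset (hΛ : Λ.IsOrdinal) {u : ZFSet} : levelSup T R Λ P f u ⊆ Λ := fun z hz => by
  obtain ⟨β, hβ, hzβ⟩ := mem_sUnion.1 hz
  exact hΛ.mem_trans hzβ (mem_sep.1 hβ).1

theorem subset_levelSup {u x β : ZFSet} (hx : x ∈ u) (hxP : x ∈ P) (hβ : β ∈ Λ)
    (h : HasLevel T R (f x) β) : β ⊆ levelSup T R Λ P f u :=
  fun _ hz => mem_sUnion_of_mem hz (mem_sep.2 ⟨hβ, x, hx, hxP, h⟩)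

theorem levelSup_mem_of_mk_le {δ : Cardinal.{1}} (hΛ : IsCardOrd Λ (Order.succ δ))
    (hδ : ℵ₀ ≤ δ) {u : ZFSet} (hu : #u.toSet ≤ δ) : levelSup T R Λ P f u ∈ Λ := by
  refine hΛ.sUnion_mem hδ (fun _ hβ => (mem_sep.1 hβ).1) (le_trans ?_ hu)
  have hx : ∀ β : (Λ.sep fun β => ∃ x ∈ u, x ∈ P ∧ HasLevel T R (f x) β).toSet,
      ∃ x : u.toSet, HasLevel T R (f x) β := fun β =>
    let ⟨x, hx, _, hxβ⟩ := (mem_sep.1 β.2).2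
    ⟨⟨x, hx⟩, hxβ⟩
  choose g hg using hx
  refine mk_le_of_injective (f := g) fun β β' hββ' => Subtype.ext ((hg β).unique ?_)
  rw [hββ']
  exact hg β'

theorem below_subset {u : ZFSet} {s : ZFSet.{u}} : below T R P f u s ⊆ u :=
  fun _ hx => (mem_sep.1 hx).1

theorem incomparablePair_subset {C : Set ZFSet} : incomparablePair R f C ⊆ C := by
  unfold incomparablePair
  split_ifs with h
  · exact Set.insert_subset_iff.2 ⟨h.choose_spec.1, Set.singleton_subset_iff.2
      h.choose_spec.2.choose_spec.1⟩
  · exact Set.empty_subset C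

theorem incomparablePair_finite {C : Set ZFSet} : (incomparablePair R f C).Finite := by
  unfold incomparablePair
  split_ifs
  · exact Set.toFinite _
  · exact Set.finite_empty

theorem exists_incomparable_mem_incomparablePair {C : Set ZFSet}
    (h : ∃ x ∈ C, ∃ y ∈ C, ¬Comparable R (f x) (f y)) :
    ∃ x ∈ incomparablePair R f C, ∃ y ∈ incomparablePair R f C, ¬Comparable R (f x) (f y) := by
  rw [incomparablePair, dif_pos h]
  exact ⟨_, Set.mem_insert _ _, _, Set.mem_insert_of_mem _ rfl, h.choose_spec.2.choose_spec.2⟩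

variable {δ : Cardinal.{1}} {M : Set ZFSet.{0}} {s : ZFSet.{u}} {α : ZFSet.{v}} {E : ZFSet.{0}}

/-- The trace on `a` is computed from one node below `s`, indexed in `M`, above all levels
indexed in `a`. -/
theorem approx_below (htree : IsTreeOfHeight T R Λ) (hΛ : IsCardOrd Λ (Order.succ δ))
    (hδ : ℵ₀ ≤ δ) (hs : HasLevel T R s α) (hcof : PredCofinal M T R Λ P f s)
    (hsup : ∀ u ∈ M, levelSup T R Λ P f u ∈ M)
    (hbelow : ∀ u ∈ M, ∀ v ∈ M, below T R P f u (f v) ∈ M) :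
    Approx (Order.succ δ) (below T R P f P s) M := by
  obtain ⟨-, -, hR, -, hlevels, -⟩ := htree
  intro a ha hδa
  have hL : levelSup T R Λ P f a ∈ Λ := levelSup_mem_of_mk_le hΛ hδ (Order.lt_succ_iff.1 hδa)
  obtain ⟨v, hvM, -, hvs, β, -, hLβ, hvβ⟩ := hcof _ (hsup a ha) hL
  suffices below T R P f P s ∩ a = below T R P f a (f v) from this ▸ hbelow a ha v hvM
  ext x
  simp only [below, mem_inter, mem_sep]
  constructor
  · rintro ⟨⟨hxP, -, hxs⟩, hxa⟩
    obtain ⟨μ, hμ, hxμ⟩ := hlevels _ hxs.1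
    have hμβ : μ ∈ β :=
      hxμ.1.mem_of_subset_of_mem hvβ.1 (subset_levelSup hxa hxP hμ hxμ) hLβ
    exact ⟨hxa, hxP, hxs.1, hs.rel_of_level_mem hR hxs hvs hxμ hvβ hμβ⟩
  · rintro ⟨hxa, hxP, hxT, hxv⟩
    exact ⟨⟨hxP, hxP, hxT, hR _ _ _ hxv hvs.2⟩, hxa⟩

theorem comparable_of_guess (hs : HasLevel T R s α)
    (hinc : ∀ u ∈ M, incomparablePair R f (u.toSet ∩ P.toSet) ⊆ M) (hE : E ∈ M)
    (hEM : E.toSet ∩ M = (below T R P f P s).toSet ∩ M) :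
    ∀ x ∈ E.toSet ∩ P.toSet, ∀ y ∈ E.toSet ∩ P.toSet, Comparable R (f x) (f y) := by
  by_contra! h
  obtain ⟨x, hx, y, hy, hxy⟩ := exists_incomparable_mem_incomparablePair h
  have hpred : ∀ z ∈ incomparablePair R f (E.toSet ∩ P.toSet), f z ∈ Pred T R s := fun z hz => by
    have : z ∈ E.toSet ∩ M := ⟨(incomparablePair_subset hz).1, hinc E hE hz⟩
    rw [hEM] at this
    exact (mem_sep.1 this.1).2.2
  exact hxy (hs.comparable_of_mem_pred (hpred x hx) (hpred y hy))

theorem levelSup_eq_of_guess (hΛ : Λ.IsOrdinal) (hcof : PredCofinal M T R Λ P f s)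
    (hsup : ∀ u ∈ M, levelSup T R Λ P f u ∈ M) (hE : E ∈ M)
    (hEM : E.toSet ∩ M = (below T R P f P s).toSet ∩ M) : levelSup T R Λ P f E = Λ := by
  refine (((isOrdinal_levelSup hΛ).subset_iff_eq_or_mem hΛ).1 (levelSup_subset hΛ)).resolve_right
    fun hL => ?_
  obtain ⟨v, hvM, hvP, hvs, β, hβΛ, hLβ, hvβ⟩ := hcof _ (hsup E hE) hL
  have hvE : v ∈ E.toSet ∩ M := hEM ▸ ⟨mem_sep.2 ⟨hvP, hvP, hvs⟩, hvM⟩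
  exact mem_irrefl _ (subset_levelSup hvE.1 hvP hβΛ hvβ hLβ)

/-- The nodes indexed in a guess `E` of `below T R P f P s` form a chain through every level. -/
theorem exists_branch_of_guessing (htree : IsTreeOfHeight T R Λ)
    (hΛ : IsCardOrd Λ (Order.succ δ)) (hδ : ℵ₀ ≤ δ) (hfT : ∀ x ∈ P, f x ∈ T)
    (hs : HasLevel T R s α) (hcof : PredCofinal M T R Λ P f s)
    (hguess : IsGuessing (Order.succ δ) M) (hPM : P ∈ M)
    (hsup : ∀ u ∈ M, levelSup T R Λ P f u ∈ M)
    (hbelow : ∀ u ∈ M, ∀ v ∈ M, below T R P f u (f v) ∈ M)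
    (hinc : ∀ u ∈ M, incomparablePair R f (u.toSet ∩ P.toSet) ⊆ M) :
    ∃ b, IsBranch T R Λ b := by
  obtain ⟨E, hE, hEM⟩ := hguess (below T R P f P s) ⟨P, hPM, fun _ hx => (mem_sep.1 hx).1⟩
    (approx_below htree hΛ hδ hs hcof hsup hbelow)
  have hchain := comparable_of_guess hs hinc hE hEM
  refine exists_branch_of_chain htree (C := f '' (E.toSet ∩ P.toSet))
    (Set.image_subset_iff.2 fun x hx => hfT x hx.2) ?_ fun β hβ => ?_
  · rintro _ ⟨x, hx, rfl⟩ _ ⟨y, hy, rfl⟩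
    exact hchain x hx y hy
  · rw [← levelSup_eq_of_guess hΛ.1 hcof hsup hE hEM] at hβ
    obtain ⟨μ, hμ, hβμ⟩ := mem_sUnion.1 hβ
    obtain ⟨-, x, hxE, hxP, hxμ⟩ := mem_sep.1 hμ
    exact ⟨f x, Set.mem_image_of_mem f ⟨hxE, hxP⟩, μ, hxμ, hβμ⟩

end Guessing

section AscentPath

open Classical in
noncomputable def unpair (x : ZFSet) : ZFSet × ZFSet :=
  if h : ∃ p : ZFSet × ZFSet, x = pair p.1 p.2 then h.choose else (∅, ∅)

theorem unpair_pair (a b : ZFSet) : unpair (pair a b) = (a, b) := by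
  have h : ∃ p : ZFSet × ZFSet, pair a b = pair p.1 p.2 := ⟨(a, b), rfl⟩
  rw [unpair, dif_pos h]
  obtain ⟨ha, hb⟩ := pair_inj.1 h.choose_spec
  exact Prod.ext ha.symm hb.symm

/-- The tree may live in any universe, the models in `ZFSet.{0}`: they see the path through the
codes `pair β ζ`. -/
noncomputable def pathNode (t : ZFSet.{0} → ZFSet.{0} → ZFSet.{u}) (x : ZFSet.{0}) : ZFSet.{u} :=
  t (unpair x).1 (unpair x).2

@[simp]
theorem pathNode_pair (t : ZFSet.{0} → ZFSet.{0} → ZFSet.{u}) (β ζ : ZFSet.{0}) :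
    pathNode t (pair β ζ) = t β ζ := by
  simp [pathNode, unpair_pair]

variable {δ : Cardinal.{1}} {T R : ZFSet.{u}} {Λ γ : ZFSet.{0}}
  {t : ZFSet.{0} → ZFSet.{0} → ZFSet.{u}} {M : Set ZFSet.{0}}

theorem pathNode_mem (hlev : ∀ α ∈ Λ, ∀ ζ ∈ γ, t α ζ ∈ T ∧ HasLevel T R (t α ζ) α) {x : ZFSet}
    (hx : x ∈ prod Λ γ) : pathNode t x ∈ T := by
  obtain ⟨β, hβ, ζ, hζ, rfl⟩ := mem_prod.1 hx
  exact pathNode_pair t β ζ ▸ (hlev β hβ ζ hζ).1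

/-- The node is `t α* η` for `α* = sup (M ∩ Λ)` and an `η` used cofinally often by the ascent
path between `M ∩ Λ` and `α*`. -/
theorem exists_predCofinal (hδ : ℵ₀ < δ) (hΛ : IsCardOrd Λ (Order.succ δ))
    (hM : #M ≤ δ) (hcof : cofSup (M ∩ Λ.toSet) = δ) (hγδ : #γ.toSet < δ)
    (hlev : ∀ α ∈ Λ, ∀ ζ ∈ γ, t α ζ ∈ T ∧ HasLevel T R (t α ζ) α)
    (hasc : ∀ α ∈ Λ, ∀ β ∈ Λ, α ∈ β → ∃ ζ ∈ γ, ∃ η ∈ γ, pair (t α ζ) (t β η) ∈ R)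
    (hpair : ∀ β ∈ M, β ∈ Λ → ∀ ζ ∈ γ, pair β ζ ∈ M) :
    ∃ α ∈ Λ, ∃ η ∈ γ, PredCofinal M T R Λ (prod Λ γ) (pathNode t) (t α η) := by
  have hA : ∀ x ∈ M ∩ Λ.toSet, x.IsOrdinal := fun x hx => hΛ.1.mem hx.2
  have hnomax : ∀ m ∈ M ∩ Λ.toSet, ∃ x ∈ M ∩ Λ.toSet, m ∈ x := fun m hm => by
    obtain ⟨x, hx, hxm⟩ :=
      exists_not_subset_of_one_lt_cofSup (hcof ▸ one_lt_aleph0.trans hδ) hm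
    exact ⟨x, hx, ((hA x hx).not_subset_iff_mem (hA m hm)).1 (mt coe_subset_coe.2 hxm)⟩
  set αs := ⋃₀ Λ.sep (· ∈ M)
  have hαs : αs ∈ Λ := by
    refine hΛ.sUnion_mem hδ.le (fun _ hy => (mem_sep.1 hy).1) ((mk_le_mk_of_subset ?_).trans hM)
    exact fun _ hy => (mem_sep.1 hy).2
  have hlt : ∀ β ∈ M ∩ Λ.toSet, β ∈ αs := fun β hβ =>
    let ⟨x, hx, hβx⟩ := hnomax β hβ
    mem_sUnion_of_mem hβx (mem_sep.2 ⟨hx.2, hx.1⟩)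
  obtain ⟨η, hη, hcofη⟩ := exists_cofinal_color hA (hcof ▸ hγδ)
    (fun β η => ∃ ζ ∈ γ, pair (t β ζ) (t αs η) ∈ R) fun β hβ =>
      let ⟨ζ, hζ, η, hη, h⟩ := hasc β hβ.2 αs hαs (hlt β hβ)
      ⟨η, hη, ζ, hζ, h⟩
  refine ⟨αs, hαs, η, hη, fun x hxM hxΛ => ?_⟩
  obtain ⟨x', hx', hxx'⟩ := hnomax x ⟨hxM, hxΛ⟩
  obtain ⟨β, ⟨hβM, hβΛ⟩, ⟨ζ, hζ, hR⟩, hx'β⟩ := hcofη x' hx'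
  refine ⟨pair β ζ, hpair β hβM hβΛ ζ hζ, mem_prod.2 ⟨β, hβΛ, ζ, hζ, rfl⟩, ?_, β, hβΛ,
    hx'β hxx', ?_⟩
  · rw [pathNode_pair]
    exact ⟨(hlev β hβΛ ζ hζ).1, hR⟩
  · rw [pathNode_pair]
    exact (hlev β hβΛ ζ hζ).2

def hullOps (T R : ZFSet.{u}) (Λ γ : ZFSet.{0}) (t : ZFSet.{0} → ZFSet.{0} → ZFSet.{u})
    (u v : ZFSet.{0}) : Set ZFSet.{0} :=
  {levelSup T R Λ (prod Λ γ) (pathNode t) u, below T R (prod Λ γ) (pathNode t) u (pathNode t v)} ∪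
    incomparablePair R (pathNode t) (u.toSet ∩ (prod Λ γ).toSet) ∪ (pair u ·) '' γ.toSet

structure IsHullClosed (M : Set ZFSet.{0}) (T R : ZFSet.{u}) (Λ γ : ZFSet.{0})
    (t : ZFSet.{0} → ZFSet.{0} → ZFSet.{u}) : Prop where
  levelSup_mem : ∀ u ∈ M, levelSup T R Λ (prod Λ γ) (pathNode t) u ∈ M
  below_mem : ∀ u ∈ M, ∀ v ∈ M, below T R (prod Λ γ) (pathNode t) u (pathNode t v) ∈ M
  incomparablePair_subset :
    ∀ u ∈ M, incomparablePair R (pathNode t) (u.toSet ∩ (prod Λ γ).toSet) ⊆ M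
  pair_mem : ∀ β ∈ M, β ∈ Λ → ∀ ζ ∈ γ, pair β ζ ∈ M

theorem mk_hullOps_le (hδ : ℵ₀ ≤ δ) (hγ : #γ.toSet ≤ δ) (u v : ZFSet) :
    #(hullOps T R Λ γ t u v) ≤ δ := by
  have hfin : ∀ s : Set ZFSet, s.Finite → #s ≤ δ := fun s hs => hs.lt_aleph0.le.trans hδ
  exact (mk_union_le _ _).trans (add_le_of_le hδ ((mk_union_le _ _).trans
    (add_le_of_le hδ (hfin _ (Set.toFinite _)) (hfin _ incomparablePair_finite)))
    (mk_image_le.trans hγ))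

theorem IsHullClosed.of_closed {θ : Cardinal.{1}} (hMθ : M ⊆ HSet θ) (hΛθ : Hered θ Λ)
    (hPθ : Hered θ (prod Λ γ)) (hΛ : Λ.IsOrdinal)
    (hM : ∀ u ∈ M, ∀ v ∈ M, hullOps T R Λ γ t u v ∩ HSet θ ⊆ M) :
    IsHullClosed M T R Λ γ t where
  levelSup_mem u hu := hM u hu u hu ⟨by simp [hullOps], hΛθ.of_subset (levelSup_subset hΛ)⟩
  below_mem u hu v hv := hM u hu v hv ⟨by simp [hullOps], Hered.of_subset (hMθ hu) below_subset⟩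
  incomparablePair_subset u hu w hw :=
    hM u hu u hu ⟨by simp [hullOps, hw], Hered.of_mem (hMθ hu) (GM.incomparablePair_subset hw).1⟩
  pair_mem β hβ hβΛ ζ hζ :=
    hM β hβ β hβ ⟨Or.inr ⟨ζ, hζ, rfl⟩, hPθ.of_mem (mem_prod.2 ⟨β, hβΛ, ζ, hζ, rfl⟩)⟩

end AscentPath

end GM

theorem stmt11_general
    (δ : Cardinal.{1}) (hδu : Cardinal.aleph0 < δ)
    (hGMP : GM.GMPwit (Order.succ δ) (Order.succ δ)
      (fun M => GM.cofSup {x | x ∈ M ∧ x.IsOrdinal ∧ #x.toSet ≤ δ} = δ ∧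
        GM.ClosedUnder δ M))
    (T R Λ : ZFSet) (hΛ : GM.IsCardOrd Λ (Order.succ δ))
    (htree : GM.IsTreeOfHeight T R Λ)
    (γ : ZFSet) (hγδ : #γ.toSet < δ)
    (t : ZFSet → ZFSet → ZFSet)
    (hlev : ∀ α ∈ Λ.toSet, ∀ ζ ∈ γ.toSet, t α ζ ∈ T.toSet ∧ GM.HasLevel T R (t α ζ) α)
    (hasc : ∀ α ∈ Λ.toSet, ∀ β ∈ Λ.toSet, α ∈ β.toSet →
      ∃ ζ ∈ γ.toSet, ∃ η ∈ γ.toSet, ZFSet.pair (t α ζ) (t β η) ∈ R) :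
    ∃ b : ZFSet, GM.IsBranch T R Λ b := by
  obtain ⟨θ₀, hGMP⟩ := hGMP
  obtain ⟨θ, hθ₀, hθ, hθH⟩ := GM.exists_isRegular_hered {Λ, ZFSet.prod Λ γ} θ₀
  have hPθ : GM.Hered θ (ZFSet.prod Λ γ) := hθH.of_mem (by simp)
  obtain ⟨M, ⟨-, hguess, hMδ, hcof, -⟩, hMθ, hPM, hMops⟩ :=
    (hGMP θ hθ₀.le hθ).exists_closed hδu.le (ZFSet.prod Λ γ) (GM.hullOps T R Λ γ t)
      (GM.mk_hullOps_le hδu.le hγδ.le)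
  have hM : GM.IsHullClosed M T R Λ γ t := .of_closed hMθ (hθH.of_mem (by simp)) hPθ hΛ.1 hMops
  rw [hΛ.setOf_eq] at hcof
  obtain ⟨α, hα, η, hη, hcofinal⟩ := GM.exists_predCofinal hδu hΛ (Order.lt_succ_iff.1 hMδ) hcof
    hγδ hlev hasc hM.pair_mem
  exact GM.exists_branch_of_guessing htree hΛ hδu.le (fun _ => GM.pathNode_mem hlev)
    (hlev α hα η hη).2 hcofinal hguess (hPM hPθ) hM.levelSup_mem hM.below_mem
    hM.incomparablePair_subset

/-- under `GMP(δ⁺, δ⁺)` witnessed by `<δ`-closed models δ-close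
to δ⁺, a tree of height δ⁺ with a weak ascent path of width `< δ` has a
cofinal branch. -/
theorem stmt11
    (δ : Cardinal.{1}) (hδ : δ.IsRegular) (hδu : Cardinal.aleph0 < δ)
    (hGMP : GM.GMPwit (Order.succ δ) (Order.succ δ)
      (fun M => GM.cofSup {x | x ∈ M ∧ x.IsOrdinal ∧ #x.toSet ≤ δ} = δ ∧
        GM.ClosedUnder δ M))
    (T R Λ : ZFSet) (hΛ : GM.IsCardOrd Λ (Order.succ δ))
    (htree : GM.IsTreeOfHeight T R Λ)
    (γ : ZFSet) (hγ : γ.IsOrdinal) (hγδ : #γ.toSet < δ) (hγne : γ ≠ ∅)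
    (t : ZFSet → ZFSet → ZFSet)
    (hlev : ∀ α ∈ Λ.toSet, ∀ ζ ∈ γ.toSet, t α ζ ∈ T.toSet ∧ GM.HasLevel T R (t α ζ) α)
    (hasc : ∀ α ∈ Λ.toSet, ∀ β ∈ Λ.toSet, α ∈ β.toSet →
      ∃ ζ ∈ γ.toSet, ∃ η ∈ γ.toSet, ZFSet.pair (t α ζ) (t β η) ∈ R) :
    ∃ b : ZFSet, GM.IsBranch T R Λ b :=
  stmt11_general δ hδu hGMP T R Λ hΛ htree γ hγδ t hlev hasc
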